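/- Let X be a finite nonempty set, d ≥ 1, H : X^{d+1} → ℝ any function, and r a strictly positive probability distribution on X. Then there exist functions κ : X^d → ℝ and δ : X → ℝ such that w(x_{d+1}|x_1,…,x_d) = exp(H(x_1,…,x_{d+1}) + κ(x_2,…,x_{d+1}) − κ(x_1,…,x_d) − δ(x_{d+1})) is a strictly positive d-th order Markov kernel on X (i.e., Σ_{x_{d+1}∈X} w(x_{d+1}|x_1,…,x_d) = 1 for all (x_1,…,x_d)), and w admits a stationary distribution p^{(d)} on X^d whose first-order marginal equals r: Σ_{x_2,…,x_d} p^{(d)}(x_1,x_2,…,x_d) = r(x_1) for all x_1 ∈ X. -/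

import Mathlib

open scoped Classical
open Finset

/-- A (row-stochastic) Markov kernel on a finite set `X`: `w x y` means `w(y|x)`. -/
def IsMarkovKernel {X : Type*} [Fintype X] (w : X → X → ℝ) : Prop :=
  (∀ x y : X, 0 ≤ w x y) ∧ ∀ x : X, ∑ y : X, w x y = 1

/-- The directed graph `(X, E)` is strongly connected: from any `x` there is a
finite directed path along edges of `E` to any `y`. -/
def StronglyConnected {X : Type*} (E : Set (X × X)) : Prop :=
  ∀ x y : X, Relation.ReflTransGen (fun a b => (a, b) ∈ E) x y

/-- Membership in `W(X,E)`: a Markov kernel whose support is exactly `E`. -/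
def MemW {X : Type*} [Fintype X] (E : Set (X × X)) (w : X → X → ℝ) : Prop :=
  IsMarkovKernel w ∧ ∀ x y : X, 0 < w x y ↔ (x, y) ∈ E

/-- `p` is a stationary probability distribution of the kernel `w`. -/
def IsStatDist {X : Type*} [Fintype X] (w : X → X → ℝ) (p : X → ℝ) : Prop :=
  (∀ x : X, 0 ≤ p x) ∧ (∑ x : X, p x = 1) ∧ ∀ y : X, ∑ x : X, p x * w x y = p y

/-- The stationary distribution `p_w` of `w` (unique for `w ∈ W(X,E)` with
`(X,E)` strongly connected), obtained by choice from existence. -/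
noncomputable def statDist {X : Type*} [Fintype X] (w : X → X → ℝ) : X → ℝ :=
  if h : ∃ p : X → ℝ, IsStatDist w p then h.choose else fun _ => 0

/-- The divergence rate `D(v|w) = Σ_{(x,y)∈E} p_v(x) v(y|x) log (v(y|x)/w(y|x))`. -/
noncomputable def divRate {X : Type*} [Fintype X] (E : Set (X × X))
    (v w : X → X → ℝ) : ℝ :=
  ∑ x : X, ∑ y : X,
    if (x, y) ∈ E then statDist v x * v x y * Real.log (v x y / w x y) else 0

/-- `F_1, …, F_K` are linearly independent modulo
`N = {(x,y) ↦ κ(y) − κ(x) − c}` (as functions on `E`). -/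
def LinIndepModN {X : Type*} (E : Set (X × X)) {K : ℕ} (F : Fin K → X → X → ℝ) : Prop :=
  ∀ a : Fin K → ℝ,
    (∃ (κ : X → ℝ) (c : ℝ), ∀ x y : X, (x, y) ∈ E →
      ∑ k : Fin K, a k * F k x y = κ y - κ x - c) →
    a = 0

/-- Membership in the exponential family generated by `C, F_1, …, F_K`. -/
def MemExpFam {X : Type*} [Fintype X] (E : Set (X × X)) {K : ℕ}
    (C : X → X → ℝ) (F : Fin K → X → X → ℝ) (w : X → X → ℝ) : Prop :=
  MemW E w ∧ ∃ (θ : Fin K → ℝ) (κ : X → ℝ) (ψ : ℝ), ∀ x y : X, (x, y) ∈ E →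
    w x y = Real.exp (C x y + ∑ k : Fin K, θ k * F k x y + κ y - κ x - ψ)

/-- Membership in the mixture family `M(μ_1,…,μ_K)`:
`Σ_{(x,y)∈E} p_w(x) w(y|x) F_k(x,y) = μ_k` for all `k`. -/
def MemMix {X : Type*} [Fintype X] (E : Set (X × X)) {K : ℕ}
    (F : Fin K → X → X → ℝ) (μ : Fin K → ℝ) (w : X → X → ℝ) : Prop :=
  MemW E w ∧ ∀ k : Fin K,
    (∑ x : X, ∑ y : X, if (x, y) ∈ E then statDist w x * w x y * F k x y else 0) = μ k


namespace S18

lemma tail_snoc {X : Type*} {n : ℕ} (s : Fin (n+1) → X) (y : X) :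
    Fin.tail (Fin.snoc s y : Fin (n+2) → X) = Fin.snoc (Fin.tail s) y := by
  funext i
  refine Fin.lastCases ?_ (fun j => ?_) i
  · simp [Fin.tail, Fin.succ_last]
  · simp only [Fin.tail, Fin.snoc_castSucc, Fin.succ_castSucc]

lemma sum_cons_eq {X : Type*} [Fintype X] {m : ℕ} (f : (Fin (m+1) → X) → ℝ) :
    ∑ t : Fin (m+1) → X, f t = ∑ x : X, ∑ u : Fin m → X, f (Fin.cons x u) := by
  have hbij : Function.Bijective (fun p : X × (Fin m → X) => (Fin.cons p.1 p.2 : Fin (m+1) → X)) := by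
    constructor
    · intro a b hab
      have h0 := congrFun hab 0
      simp only [Fin.cons_zero] at h0
      have ht : Fin.tail (Fin.cons a.1 a.2 : Fin (m+1) → X) = Fin.tail (Fin.cons b.1 b.2 : Fin (m+1) → X) := by
        simp only at hab; rw [hab]
      simp only [Fin.tail_cons] at ht
      exact Prod.ext h0 ht
    · intro t
      exact ⟨(t 0, Fin.tail t), Fin.cons_self_tail t⟩
  calc ∑ t : Fin (m+1) → X, f t
      = ∑ p : X × (Fin m → X), f (Fin.cons p.1 p.2) :=
        (Fintype.sum_bijective _ hbij _ _ (fun p => rfl)).symm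
    _ = ∑ x : X, ∑ u : Fin m → X, f (Fin.cons x u) := Fintype.sum_prod_type _

lemma sum_snoc_eq {X : Type*} [Fintype X] {m : ℕ} (f : (Fin (m+1) → X) → ℝ) :
    ∑ t : Fin (m+1) → X, f t = ∑ u : Fin m → X, ∑ y : X, f (Fin.snoc u y) := by
  have hbij : Function.Bijective (fun p : (Fin m → X) × X => (Fin.snoc p.1 p.2 : Fin (m+1) → X)) := by
    constructor
    · intro a b hab
      simp only at hab
      have h0 : (Fin.snoc a.1 a.2 : Fin (m+1) → X) (Fin.last m) = (Fin.snoc b.1 b.2 : Fin (m+1) → X) (Fin.last m) := by rw [hab]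
      simp only [Fin.snoc_last] at h0
      have ht : Fin.init (Fin.snoc a.1 a.2 : Fin (m+1) → X) = Fin.init (Fin.snoc b.1 b.2 : Fin (m+1) → X) := by rw [hab]
      simp only [Fin.init_snoc] at ht
      exact Prod.ext ht h0
    · intro t
      exact ⟨(Fin.init t, t (Fin.last m)), Fin.snoc_init_self t⟩
  calc ∑ t : Fin (m+1) → X, f t
      = ∑ p : (Fin m → X) × X, f (Fin.snoc p.1 p.2) :=
        (Fintype.sum_bijective _ hbij _ _ (fun p => rfl)).symm
    _ = ∑ u : Fin m → X, ∑ y : X, f (Fin.snoc u y) := Fintype.sum_prod_type _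

/-- tangent line bound from above: ψ c - ψ a ≤ (log c + 1)(c - a) -/
lemma psi_tangent_upper {a c : ℝ} (ha : 0 ≤ a) (hc : 0 < c) :
    c * Real.log c - a * Real.log a ≤ (Real.log c + 1) * (c - a) := by
  rcases eq_or_lt_of_le ha with h | h
  · subst h
    simp only [Real.log_zero, mul_zero, sub_zero]
    nlinarith
  · have hl := Real.log_le_sub_one_of_pos (show 0 < c / a by positivity)
    rw [Real.log_div (ne_of_gt hc) (ne_of_gt h)] at hl
    have h2 : a * (Real.log c - Real.log a) ≤ a * (c / a - 1) :=
      mul_le_mul_of_nonneg_left hl h.le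
    have h3 : a * (c / a - 1) = c - a := by field_simp
    nlinarith

/-- tangent line bound from below: (log a + 1)(c - a) ≤ ψ c - ψ a -/
lemma psi_tangent_lower {a c : ℝ} (ha : 0 < a) (hc : 0 ≤ c) :
    (Real.log a + 1) * (c - a) ≤ c * Real.log c - a * Real.log a := by
  rcases eq_or_lt_of_le hc with h | h
  · subst h
    simp only [Real.log_zero, mul_zero, zero_mul, zero_sub]
    nlinarith
  · have hl := Real.log_le_sub_one_of_pos (show 0 < a / c by positivity)
    rw [Real.log_div (ne_of_gt ha) (ne_of_gt h)] at hl
    have h2 : c * (Real.log a - Real.log c) ≤ c * (a / c - 1) :=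
      mul_le_mul_of_nonneg_left hl h.le
    have h3 : c * (a / c - 1) = a - c := by field_simp
    nlinarith

variable {X : Type*} [Fintype X] [Nonempty X] {n : ℕ}

/-- next state in the de Bruijn shift -/
def nxt (s : Fin (n+1) → X) (y : X) : Fin (n+1) → X := Fin.snoc (Fin.tail s) y

noncomputable def row (P : (Fin (n+1) → X) → X → ℝ) (s : Fin (n+1) → X) : ℝ := ∑ y : X, P s y

noncomputable def col (P : (Fin (n+1) → X) → X → ℝ) (t : Fin (n+1) → X) : ℝ :=
  ∑ x : X, P (Fin.cons x (Fin.init t)) (t (Fin.last n))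

def Feas (r : X → ℝ) (P : (Fin (n+1) → X) → X → ℝ) : Prop :=
  (∀ s y, 0 ≤ P s y) ∧ (∀ t, col P t = row P t) ∧ (∀ y, ∑ s : Fin (n+1) → X, P s y = r y)

lemma prodsum (r : X → ℝ) (hrsum : ∑ x : X, r x = 1) :
    ∀ m : ℕ, ∑ s : Fin m → X, ∏ i, r (s i) = 1 := by
  intro m
  induction m with
  | zero => simp
  | succ k ih =>
    rw [sum_cons_eq (fun s => ∏ i, r (s i))]
    have : ∀ (x : X) (u : Fin k → X), (∏ i, r ((Fin.cons x u : Fin (k+1) → X) i)) = r x * ∏ i, r (u i) := by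
      intro x u
      rw [show (fun i => r ((Fin.cons x u : Fin (k+1) → X) i)) = (Fin.cons (r x) (fun j => r (u j)) : Fin (k+1) → ℝ) by
        funext i; exact congrFun (Fin.comp_cons r x u) i]
      exact Fin.prod_cons _ _
    simp_rw [this, ← Finset.mul_sum, ih, mul_one, hrsum]

noncomputable def Q0 (r : X → ℝ) (s : Fin (n+1) → X) (y : X) : ℝ := (∏ i, r (s i)) * r y

lemma Q0_pos (r : X → ℝ) (hr : ∀ x, 0 < r x) (s : Fin (n+1) → X) (y : X) : 0 < Q0 r s y :=
  mul_pos (Finset.prod_pos (fun i _ => hr _)) (hr y)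

lemma Q0_feas (r : X → ℝ) (hr : ∀ x, 0 < r x) (hrsum : ∑ x : X, r x = 1) :
    Feas r (Q0 (n := n) r) := by
  refine ⟨fun s y => (Q0_pos r hr s y).le, ?_, ?_⟩
  · intro t
    have hprod : ∀ x : X, (∏ i, r ((Fin.cons x (Fin.init t) : Fin (n+1) → X) i)) = r x * ∏ j, r (Fin.init t j) := by
      intro x
      rw [show (fun i => r ((Fin.cons x (Fin.init t) : Fin (n+1) → X) i)) = (Fin.cons (r x) (fun j => r (Fin.init t j)) : Fin (n+1) → ℝ) by
        funext i; exact congrFun (Fin.comp_cons r x (Fin.init t)) i]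
      exact Fin.prod_cons _ _
    have hsnoc : (∏ j, r (Fin.init t j)) * r (t (Fin.last n)) = ∏ i, r (t i) := by
      rw [show (fun i => r (t i)) = (fun i => (Fin.snoc (fun j => r (Fin.init t j)) (r (t (Fin.last n))) : Fin (n+1) → ℝ) i) by
        funext i
        refine Fin.lastCases ?_ (fun j => ?_) i
        · simp
        · simp [Fin.init]]
      exact (Fin.prod_snoc _ _).symm
    unfold col row Q0
    simp_rw [hprod]
    rw [← Finset.sum_mul, ← Finset.sum_mul]
    simp_rw [mul_assoc, hsnoc]
    rw [hrsum, ← Finset.mul_sum, hrsum]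
    ring
  · intro y
    unfold Q0
    rw [← Finset.sum_mul, prodsum r hrsum, one_mul]

noncomputable def Gfun (H' : (Fin (n+1) → X) → X → ℝ) (P : (Fin (n+1) → X) → X → ℝ) : ℝ :=
  (∑ s : Fin (n+1) → X, ∑ y : X, P s y * Real.log (P s y))
  - (∑ s : Fin (n+1) → X, row P s * Real.log (row P s))
  - ∑ s : Fin (n+1) → X, ∑ y : X, P s y * H' s y

variable {r : X → ℝ} {P : (Fin (n+1) → X) → X → ℝ}

lemma feas_total (hP : Feas r P) (hrsum : ∑ x : X, r x = 1) :
    ∑ s : Fin (n+1) → X, row P s = 1 := by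
  unfold row
  rw [Finset.sum_comm]
  simp_rw [hP.2.2]
  exact hrsum

lemma row_nonneg (hP : Feas r P) (s : Fin (n+1) → X) : 0 ≤ row P s :=
  Finset.sum_nonneg fun y _ => hP.1 s y

lemma entry_le_row (hP : Feas r P) (s : Fin (n+1) → X) (y : X) : P s y ≤ row P s :=
  Finset.single_le_sum (fun y' _ => hP.1 s y') (Finset.mem_univ y)

lemma row_le_one (hP : Feas r P) (hrsum : ∑ x : X, r x = 1) (s : Fin (n+1) → X) :
    row P s ≤ 1 := by
  rw [← feas_total hP hrsum]
  exact Finset.single_le_sum (fun s' _ => row_nonneg hP s') (Finset.mem_univ s)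

lemma entry_le_one (hP : Feas r P) (hrsum : ∑ x : X, r x = 1) (s : Fin (n+1) → X) (y : X) :
    P s y ≤ 1 :=
  (entry_le_row hP s y).trans (row_le_one hP hrsum s)

lemma cont_row (s : Fin (n+1) → X) :
    Continuous fun P : (Fin (n+1) → X) → X → ℝ => row P s := by
  unfold row
  exact continuous_finset_sum _ fun y _ => (continuous_apply y).comp (continuous_apply s)

lemma cont_G (H' : (Fin (n+1) → X) → X → ℝ) : Continuous (Gfun H') := by
  unfold Gfun
  apply Continuous.sub
  apply Continuous.sub
  · exact continuous_finset_sum _ fun s _ => continuous_finset_sum _ fun y _ =>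
      Real.continuous_mul_log.comp ((continuous_apply y).comp (continuous_apply s))
  · exact continuous_finset_sum _ fun s _ => Real.continuous_mul_log.comp (cont_row s)
  · exact continuous_finset_sum _ fun s _ => continuous_finset_sum _ fun y _ =>
      by fun_prop

lemma exists_min (H' : (Fin (n+1) → X) → X → ℝ) (r : X → ℝ)
    (hr : ∀ x, 0 < r x) (hrsum : ∑ x : X, r x = 1) :
    ∃ P, Feas r P ∧ ∀ P', Feas r P' → Gfun H' P ≤ Gfun H' P' := by
  set C := {P : (Fin (n+1) → X) → X → ℝ | Feas r P} with hCdef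
  have hCclosed : IsClosed C := by
    have : C = (⋂ (s : Fin (n+1) → X), ⋂ (y : X), {P : (Fin (n+1) → X) → X → ℝ | 0 ≤ P s y})
        ∩ ((⋂ (t : Fin (n+1) → X), {P : (Fin (n+1) → X) → X → ℝ | col P t = row P t})
          ∩ (⋂ (y : X), {P : (Fin (n+1) → X) → X → ℝ | ∑ s : Fin (n+1) → X, P s y = r y})) := by
      ext P
      simp only [hCdef, Feas, Set.mem_setOf_eq, Set.mem_inter_iff, Set.mem_iInter]
    rw [this]
    refine IsClosed.inter ?_ (IsClosed.inter ?_ ?_)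
    · exact isClosed_iInter fun s => isClosed_iInter fun y =>
        isClosed_le continuous_const ((continuous_apply y).comp (continuous_apply s))
    · refine isClosed_iInter fun t => isClosed_eq ?_ (cont_row t)
      exact continuous_finset_sum _ fun x _ =>
        by fun_prop
    · exact isClosed_iInter fun y => isClosed_eq
        (continuous_finset_sum _ fun s _ => (continuous_apply y).comp (continuous_apply s))
        continuous_const
  have hsub : C ⊆ Set.pi Set.univ (fun _ : Fin (n+1) → X =>
      Set.pi Set.univ (fun _ : X => Set.Icc (0:ℝ) 1)) := by
    intro P hP
    rw [Set.mem_univ_pi]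
    intro s
    rw [Set.mem_univ_pi]
    intro y
    exact ⟨hP.1 s y, entry_le_one hP hrsum s y⟩
  have hK : IsCompact (Set.pi Set.univ (fun _ : Fin (n+1) → X =>
      Set.pi Set.univ (fun _ : X => Set.Icc (0:ℝ) 1))) :=
    isCompact_univ_pi fun _ => isCompact_univ_pi fun _ => isCompact_Icc
  have hCcomp : IsCompact C := hK.of_isClosed_subset hCclosed hsub
  obtain ⟨P, hPC, hmin⟩ := hCcomp.exists_isMinOn ⟨Q0 r, Q0_feas r hr hrsum⟩ (cont_G H').continuousOn
  exact ⟨P, hPC, fun P' hP' => hmin hP'⟩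
lemma psi_diff_bound {α t a c : ℝ} (hα : 0 < α) (hα1 : α ≤ 1) (ht : 0 ≤ t)
    (ha : α/2 ≤ a) (ha1 : a ≤ 1) (hc : α/2 ≤ c) (hc1 : c ≤ 1) (hac : |c - a| ≤ t) :
    |c * Real.log c - a * Real.log a| ≤ (|Real.log (α/2)| + 1) * t := by
  have hα2 : (0:ℝ) < α/2 := by linarith
  have ha0 : 0 < a := lt_of_lt_of_le hα2 ha
  have hc0 : 0 < c := lt_of_lt_of_le hα2 hc
  have hlogc : |Real.log c| ≤ |Real.log (α/2)| := by
    rw [abs_of_nonpos (Real.log_nonpos hc0.le hc1),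
        abs_of_nonpos (Real.log_nonpos hα2.le (by linarith))]
    have := Real.log_le_log hα2 hc
    linarith
  have hloga : |Real.log a| ≤ |Real.log (α/2)| := by
    rw [abs_of_nonpos (Real.log_nonpos ha0.le ha1),
        abs_of_nonpos (Real.log_nonpos hα2.le (by linarith))]
    have := Real.log_le_log hα2 ha
    linarith
  rw [abs_le]
  constructor
  · have h1 := psi_tangent_lower ha0 hc0.le
    have h2 : -((|Real.log (α/2)| + 1) * t) ≤ (Real.log a + 1) * (c - a) := by
      have : |(Real.log a + 1) * (c - a)| ≤ (|Real.log (α/2)| + 1) * t := by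
        rw [abs_mul]
        apply mul_le_mul _ hac (abs_nonneg _) (by positivity)
        calc |Real.log a + 1| ≤ |Real.log a| + 1 := by
              have := abs_add_le (Real.log a) 1; simpa using this
          _ ≤ |Real.log (α/2)| + 1 := by linarith
      linarith [neg_abs_le ((Real.log a + 1) * (c - a))]
    linarith
  · have h1 := psi_tangent_upper ha0.le hc0
    have h2 : (Real.log c + 1) * (c - a) ≤ (|Real.log (α/2)| + 1) * t := by
      have : |(Real.log c + 1) * (c - a)| ≤ (|Real.log (α/2)| + 1) * t := by
        rw [abs_mul]
        apply mul_le_mul _ hac (abs_nonneg _) (by positivity)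
        calc |Real.log c + 1| ≤ |Real.log c| + 1 := by
              have := abs_add_le (Real.log c) 1; simpa using this
          _ ≤ |Real.log (α/2)| + 1 := by linarith
      linarith [le_abs_self ((Real.log c + 1) * (c - a))]
    linarith

lemma row_combo {P Q' : (Fin (n+1) → X) → X → ℝ} {t : ℝ} (s : Fin (n+1) → X) :
    row (fun s y => (1-t) * P s y + t * Q' s y) s = (1-t) * row P s + t * row Q' s := by
  unfold row
  rw [Finset.sum_add_distrib, ← Finset.mul_sum, ← Finset.mul_sum]

lemma feas_combo {r : X → ℝ} {P Q' : (Fin (n+1) → X) → X → ℝ} (hP : Feas r P)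
    (hQ : Feas r Q') {t : ℝ} (ht0 : 0 ≤ t) (ht1 : t ≤ 1) :
    Feas r (fun s y => (1-t) * P s y + t * Q' s y) := by
  refine ⟨fun s y => show (0:ℝ) ≤ (1-t) * P s y + t * Q' s y by nlinarith [hP.1 s y, hQ.1 s y], fun u => ?_, fun y => ?_⟩
  · have h1 : col (fun s y => (1-t) * P s y + t * Q' s y) u = (1-t) * col P u + t * col Q' u := by
      unfold col
      rw [Finset.sum_add_distrib, ← Finset.mul_sum, ← Finset.mul_sum]
    rw [h1, row_combo, hP.2.1 u, hQ.2.1 u]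
  · rw [Finset.sum_add_distrib, ← Finset.mul_sum, ← Finset.mul_sum, hP.2.2 y, hQ.2.2 y]
    ring
lemma mul_nonpos' {a b : ℝ} (ha : 0 ≤ a) (hb : b ≤ 0) : a * b ≤ 0 := by nlinarith
lemma mul_nonpos'' {a b : ℝ} (ha : a ≤ 0) (hb : 0 ≤ b) : a * b ≤ 0 := by nlinarith
set_option maxHeartbeats 2000000 in
lemma entry_pos_of_row_pos {H' : (Fin (n+1) → X) → X → ℝ} {r : X → ℝ}
    {Pm : (Fin (n+1) → X) → X → ℝ}
    (hr : ∀ x, 0 < r x) (hrsum : ∑ x : X, r x = 1)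
    (hPm : Feas r Pm) (hmin : ∀ P', Feas r P' → Gfun H' Pm ≤ Gfun H' P')
    (s₀ : Fin (n+1) → X) (y₀ : X) (hrow : 0 < row Pm s₀) : 0 < Pm s₀ y₀ := by
  by_contra hzlt
  have hz : Pm s₀ y₀ = 0 := le_antisymm (not_lt.mp hzlt) (hPm.1 s₀ y₀)
  clear hzlt
  have hQf : Feas r (Q0 (n := n) r) := Q0_feas r hr hrsum
  -- the uniform lower bound α
  obtain ⟨α, hα0, hα1, hαPm, hαrowPm, hαQ, hαQrow⟩ :
      ∃ α : ℝ, 0 < α ∧ α ≤ 1 ∧ (∀ s y, 0 < Pm s y → α ≤ Pm s y) ∧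
        (∀ s, 0 < row Pm s → α ≤ row Pm s) ∧
        (∀ s y, α ≤ Q0 r s y) ∧ (∀ s : Fin (n+1) → X, α ≤ row (Q0 r) s) := by
    have hne : (Finset.univ : Finset ((Fin (n+1) → X) × X)).Nonempty := Finset.univ_nonempty
    have hne2 : (Finset.univ : Finset (Fin (n+1) → X)).Nonempty := Finset.univ_nonempty
    set a1 := Finset.univ.inf' hne (fun e : (Fin (n+1) → X) × X =>
      if 0 < Pm e.1 e.2 then Pm e.1 e.2 else 1) with ha1
    set a2 := Finset.univ.inf' hne2 (fun s : Fin (n+1) → X =>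
      if 0 < row Pm s then row Pm s else 1) with ha2
    set a3 := Finset.univ.inf' hne (fun e : (Fin (n+1) → X) × X => Q0 r e.1 e.2) with ha3
    set a4 := Finset.univ.inf' hne2 (fun s : Fin (n+1) → X => row (Q0 r) s) with ha4
    refine ⟨min (min a1 a2) (min (min a3 a4) 1), ?_, ?_, ?_, ?_, ?_, ?_⟩
    · refine lt_min (lt_min ?_ ?_) (lt_min (lt_min ?_ ?_) one_pos)
      · rw [ha1, Finset.lt_inf'_iff]
        intro e _
        split
        · assumption
        · exact one_pos
      · rw [ha2, Finset.lt_inf'_iff]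
        intro s _
        split
        · assumption
        · exact one_pos
      · rw [ha3, Finset.lt_inf'_iff]
        intro e _
        exact Q0_pos r hr e.1 e.2
      · rw [ha4, Finset.lt_inf'_iff]
        intro s _
        exact lt_of_lt_of_le (Q0_pos r hr s (Classical.arbitrary X))
          (entry_le_row hQf s (Classical.arbitrary X))
    · exact le_trans (min_le_right _ _) (min_le_right _ _)
    · intro s y hpos
      refine le_trans (le_trans (min_le_left _ _) (min_le_left _ _)) ?_
      have := Finset.inf'_le (fun e : (Fin (n+1) → X) × X =>
        if 0 < Pm e.1 e.2 then Pm e.1 e.2 else 1) (Finset.mem_univ (s, y))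
      rw [← ha1] at this
      simpa [if_pos hpos] using this
    · intro s hpos
      refine le_trans (le_trans (min_le_left _ _) (min_le_right _ _)) ?_
      have := Finset.inf'_le (fun s : Fin (n+1) → X =>
        if 0 < row Pm s then row Pm s else 1) (Finset.mem_univ s)
      rw [← ha2] at this
      simpa [if_pos hpos] using this
    · intro s y
      refine le_trans (le_trans (min_le_right _ _) (le_trans (min_le_left _ _) (min_le_left _ _))) ?_
      have := Finset.inf'_le (fun e : (Fin (n+1) → X) × X => Q0 r e.1 e.2)
        (Finset.mem_univ (s, y))
      rw [← ha3] at this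
      exact this
    · intro s
      refine le_trans (le_trans (min_le_right _ _) (le_trans (min_le_left _ _) (min_le_right _ _))) ?_
      have := Finset.inf'_le (fun s : Fin (n+1) → X => row (Q0 r) s) (Finset.mem_univ s)
      rw [← ha4] at this
      exact this
  set L := |Real.log (α/2)| + 1 with hLdef
  have hlogα : -Real.log α ≤ |Real.log (α/2)| := by
    rw [show α/2 = α/2 by rfl, abs_of_nonpos (Real.log_nonpos (by positivity) (by linarith)),
        Real.log_div (ne_of_gt hα0) two_ne_zero]
    have h2 : (0:ℝ) ≤ Real.log 2 := Real.log_nonneg (by norm_num)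
    linarith
  set L := |Real.log (α/2)| + 1 with hLdef
  have hL0 : 0 < L := by positivity
  set M4 := ∑ s : Fin (n+1) → X, ∑ y : X, |H' s y| with hM4def
  have hM40 : 0 ≤ M4 := Finset.sum_nonneg fun s _ => Finset.sum_nonneg fun y _ => abs_nonneg _
  set cX := (Fintype.card X : ℝ) with hcX
  have hcX1 : 1 ≤ cX := by
    rw [hcX]
    exact_mod_cast Fintype.card_pos
  set N := (Fintype.card (Fin (n+1) → X) : ℝ) with hN
  have hN0 : (0:ℝ) ≤ N := by positivity
  set K := N * ((cX + 1) * L) + M4 with hKdef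
  have hK0 : 0 ≤ K := by positivity
  -- the key inequality for all small positive t
  have key : ∀ t : ℝ, 0 < t → t ≤ 1/2 → 0 ≤ α * (t * Real.log t) + K * t := by
    intro t ht0 ht12
    have ht1 : t ≤ 1 := by linarith
    have htlog : t * Real.log t ≤ 0 :=
      mul_nonpos' ht0.le (Real.log_nonpos ht0.le ht1)
    set Pt := fun s y => (1-t) * Pm s y + t * Q0 r s y with hPtdef
    have hPtf : Feas r Pt := feas_combo hPm hQf ht0.le ht1
    have hGle : Gfun H' Pm ≤ Gfun H' Pt := hmin Pt hPtf
    have hGdiff : Gfun H' Pt - Gfun H' Pm =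
        (∑ s : Fin (n+1) → X,
          ((∑ y : X, (Pt s y * Real.log (Pt s y) - Pm s y * Real.log (Pm s y)))
            - (row Pt s * Real.log (row Pt s) - row Pm s * Real.log (row Pm s))))
        - (∑ s : Fin (n+1) → X, ∑ y : X, (Pt s y - Pm s y) * H' s y) := by
      unfold Gfun
      simp only [Finset.sum_sub_distrib, sub_mul]
      ring
    have hRb : ∀ s : Fin (n+1) → X,
        ((∑ y : X, (Pt s y * Real.log (Pt s y) - Pm s y * Real.log (Pm s y)))
          - (row Pt s * Real.log (row Pt s) - row Pm s * Real.log (row Pm s)))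
        ≤ (cX + 1) * L * t + (if s = s₀ then α * (t * Real.log t) else 0) := by
      intro s
      have hrowQa : α ≤ row (Q0 r) s := hαQrow s
      have hrowQ1 : row (Q0 r) s ≤ 1 := row_le_one hQf hrsum s
      have hrowPt : row Pt s = (1-t) * row Pm s + t * row (Q0 r) s := row_combo s
      have hrowPm1 : row Pm s ≤ 1 := row_le_one hPm hrsum s
      rcases eq_or_lt_of_le (row_nonneg hPm s) with hzr | hposr
      · -- fully zero row; note s ≠ s₀
        have hsne : s ≠ s₀ := by
          intro h
          rw [h] at hzr
          exact absurd hzr.symm (ne_of_gt hrow)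
        rw [if_neg hsne, add_zero]
        have hzent : ∀ y, Pm s y = 0 := fun y =>
          (Finset.sum_eq_zero_iff_of_nonneg (fun y _ => hPm.1 s y)).mp hzr.symm y
            (Finset.mem_univ y)
        have hPtsy : ∀ y, Pt s y = t * Q0 r s y := by
          intro y
          simp only [hPtdef, hzent y]
          ring
        have hrowz : row Pt s = t * row (Q0 r) s := by
          rw [hrowPt, ← hzr]
          ring
        have hexp : ∀ y : X, Pt s y * Real.log (Pt s y) =
            (t * Real.log t) * Q0 r s y + t * (Q0 r s y * Real.log (Q0 r s y)) := by
          intro y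
          rw [hPtsy y, Real.log_mul (ne_of_gt ht0) (ne_of_gt (Q0_pos r hr s y))]
          ring
        have hexp2 : row Pt s * Real.log (row Pt s) =
            (t * Real.log t) * row (Q0 r) s
              + t * (row (Q0 r) s * Real.log (row (Q0 r) s)) := by
          rw [hrowz, Real.log_mul (ne_of_gt ht0) (ne_of_gt (lt_of_lt_of_le hα0 hrowQa))]
          ring
        have hsumPt : (∑ y : X, (Pt s y * Real.log (Pt s y) - Pm s y * Real.log (Pm s y)))
            = (t * Real.log t) * row (Q0 r) s
              + t * ∑ y : X, Q0 r s y * Real.log (Q0 r s y) := by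
          simp only [hzent, Real.log_zero, mul_zero, zero_mul, sub_zero]
          simp_rw [hexp]
          rw [Finset.sum_add_distrib, ← Finset.mul_sum, ← Finset.mul_sum]
          rfl
        rw [hsumPt, hexp2]
        have hQlog : (∑ y : X, Q0 r s y * Real.log (Q0 r s y)) ≤ 0 := by
          apply Finset.sum_nonpos
          intro y _
          exact mul_nonpos' (Q0_pos r hr s y).le
            (Real.log_nonpos (Q0_pos r hr s y).le (entry_le_one hQf hrsum s y))
        have hrQlog : -(row (Q0 r) s * Real.log (row (Q0 r) s)) ≤ L * 1 := by
          have hlg : -Real.log (row (Q0 r) s) ≤ -Real.log α := by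
            have := Real.log_le_log hα0 hrowQa
            linarith
          have hlgpos : 0 ≤ -Real.log (row (Q0 r) s) :=
            neg_nonneg.mpr (Real.log_nonpos (lt_of_lt_of_le hα0 hrowQa).le hrowQ1)
          have h1 : -(row (Q0 r) s * Real.log (row (Q0 r) s))
              = row (Q0 r) s * (-Real.log (row (Q0 r) s)) := by ring
          rw [h1, mul_one]
          calc row (Q0 r) s * (-Real.log (row (Q0 r) s))
              ≤ 1 * (-Real.log (row (Q0 r) s)) :=
                mul_le_mul_of_nonneg_right hrowQ1 hlgpos
            _ = -Real.log (row (Q0 r) s) := one_mul _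
            _ ≤ -Real.log α := hlg
            _ ≤ |Real.log (α/2)| := hlogα
            _ ≤ L := by rw [hLdef]; linarith
        have ht' : t * (∑ y : X, Q0 r s y * Real.log (Q0 r s y)) ≤ 0 :=
          mul_nonpos' ht0.le hQlog
        have h2 : -(t * (row (Q0 r) s * Real.log (row (Q0 r) s))) ≤ t * L := by
          have := mul_le_mul_of_nonneg_left hrQlog ht0.le
          rw [mul_one] at this
          calc -(t * (row (Q0 r) s * Real.log (row (Q0 r) s)))
              = t * (-(row (Q0 r) s * Real.log (row (Q0 r) s))) := by ring
            _ ≤ t * L := mul_le_mul_of_nonneg_left (by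
                calc -(row (Q0 r) s * Real.log (row (Q0 r) s)) ≤ L * 1 := hrQlog
                  _ = L := mul_one _) ht0.le
        have hzq : row Pm s * Real.log (row Pm s) = 0 := by rw [← hzr]; ring
        have hexpand : (cX+1)*L*t = t*L + cX*(L*t) := by ring
        have h4 : 0 ≤ cX*(L*t) :=
          mul_nonneg (le_trans zero_le_one hcX1) (mul_nonneg hL0.le ht0.le)
        linarith [h2, ht', hzq, hexpand, h4]
      · -- positive row
        have hrowα : α ≤ row Pm s := hαrowPm s hposr
        have hrowdiff : |row Pt s * Real.log (row Pt s) - row Pm s * Real.log (row Pm s)|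
            ≤ L * t := by
          rw [hLdef]
          apply psi_diff_bound hα0 hα1 ht0.le (by linarith) hrowPm1
          · rw [hrowPt]
            nlinarith [hαQrow s, hα0]
          · rw [hrowPt]
            nlinarith [hαQrow s, hα0, row_nonneg hQf s]
          · rw [hrowPt]
            rw [show (1-t) * row Pm s + t * row (Q0 r) s - row Pm s
                = t * (row (Q0 r) s - row Pm s) by ring, abs_mul, abs_of_pos ht0]
            have : |row (Q0 r) s - row Pm s| ≤ 1 := by
              rw [abs_le]
              constructor
              · have := row_nonneg hQf s
                linarith
              · have := row_nonneg hPm s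
                linarith
            nlinarith
        have hentry : ∀ y : X, Pt s y * Real.log (Pt s y) - Pm s y * Real.log (Pm s y)
            ≤ L * t + (if s = s₀ ∧ y = y₀ then α * (t * Real.log t) else 0) := by
          intro y
          have hb1 : Q0 r s y ≤ 1 := entry_le_one hQf hrsum s y
          have hbα : α ≤ Q0 r s y := hαQ s y
          have ha1' : Pm s y ≤ 1 := entry_le_one hPm hrsum s y
          rcases eq_or_lt_of_le (hPm.1 s y) with hzy | hposy
          · -- zero entry
            have hPte : Pt s y = t * Q0 r s y := by
              simp only [hPtdef, ← hzy]
              ring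
            have hzpsi : Pt s y * Real.log (Pt s y)
                = (t * Real.log t) * Q0 r s y + t * (Q0 r s y * Real.log (Q0 r s y)) := by
              rw [hPte, Real.log_mul (ne_of_gt ht0) (ne_of_gt (Q0_pos r hr s y))]
              ring
            have hneg1 : t * (Q0 r s y * Real.log (Q0 r s y)) ≤ 0 :=
              mul_nonpos' ht0.le (mul_nonpos' (Q0_pos r hr s y).le
                (Real.log_nonpos (Q0_pos r hr s y).le hb1))
            by_cases hsy : s = s₀ ∧ y = y₀
            · rw [if_pos hsy]
              have : (t * Real.log t) * Q0 r s y ≤ (t * Real.log t) * α := by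
                exact mul_le_mul_of_nonpos_left hbα htlog
              rw [← hzy, Real.log_zero, mul_zero, sub_zero, hzpsi]
              nlinarith [hL0, ht0]
            · rw [if_neg hsy, add_zero]
              have : (t * Real.log t) * Q0 r s y ≤ 0 :=
                mul_nonpos'' htlog (Q0_pos r hr s y).le
              rw [← hzy, Real.log_zero, mul_zero, sub_zero, hzpsi]
              nlinarith [hL0, ht0]
          · -- positive entry
            have hsyne : ¬(s = s₀ ∧ y = y₀) := by
              rintro ⟨h1, h2⟩
              rw [h1, h2, hz] at hposy
              exact lt_irrefl 0 hposy
            rw [if_neg hsyne, add_zero]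
            have haα : α ≤ Pm s y := hαPm s y hposy
            have habs : |Pt s y * Real.log (Pt s y) - Pm s y * Real.log (Pm s y)| ≤ L * t := by
              rw [hLdef]
              apply psi_diff_bound hα0 hα1 ht0.le (by linarith) ha1'
              · simp only [hPtdef]
                nlinarith [hbα, hα0]
              · simp only [hPtdef]
                nlinarith [hbα, hα0, (Q0_pos r hr s y).le]
              · simp only [hPtdef]
                rw [show (1-t) * Pm s y + t * Q0 r s y - Pm s y
                    = t * (Q0 r s y - Pm s y) by ring, abs_mul, abs_of_pos ht0]
                have : |Q0 r s y - Pm s y| ≤ 1 := by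
                  rw [abs_le]
                  constructor
                  · linarith [(Q0_pos r hr s y).le]
                  · linarith [hPm.1 s y]
                nlinarith
            linarith [abs_le.mp habs |>.2]
        have hsument := Finset.sum_le_sum (fun y (_ : y ∈ Finset.univ) => hentry y)
        have hite : (∑ y : X, (L * t + (if s = s₀ ∧ y = y₀ then α * (t * Real.log t) else 0)))
            = cX * (L * t) + (if s = s₀ then α * (t * Real.log t) else 0) := by
          rw [Finset.sum_add_distrib, Finset.sum_const, Finset.card_univ]
          congr 1
          · rw [hcX]
            simp [nsmul_eq_mul]
          · by_cases hs : s = s₀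
            · simp [hs]
            · simp [hs]
        rw [hite] at hsument
        obtain ⟨hd1, hd2⟩ := abs_le.mp hrowdiff
        have hexp2 : (cX+1)*L*t = cX*(L*t) + L*t := by ring
        by_cases hs : s = s₀
        · rw [if_pos hs] at hsument ⊢
          linarith [hd1, hsument, hexp2]
        · rw [if_neg hs] at hsument ⊢
          linarith [hd1, hsument, hexp2]
    -- sum up the row bounds
    have hsumR := Finset.sum_le_sum (fun s (_ : s ∈ Finset.univ) => hRb s)
    have hsumRHS : (∑ s : Fin (n+1) → X,
        ((cX + 1) * L * t + (if s = s₀ then α * (t * Real.log t) else 0)))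
        = N * ((cX + 1) * L * t) + α * (t * Real.log t) := by
      rw [Finset.sum_add_distrib, Finset.sum_const, Finset.card_univ, Finset.sum_ite_eq'
        Finset.univ s₀ (fun _ => α * (t * Real.log t))]
      simp [hN, nsmul_eq_mul]
    rw [hsumRHS] at hsumR
    -- bound the linear term
    have hT3 : -(∑ s : Fin (n+1) → X, ∑ y : X, (Pt s y - Pm s y) * H' s y) ≤ t * M4 := by
      rw [hM4def, ← Finset.sum_neg_distrib, Finset.mul_sum]
      apply Finset.sum_le_sum
      intro s _
      rw [← Finset.sum_neg_distrib, Finset.mul_sum]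
      apply Finset.sum_le_sum
      intro y _
      have h1 : Pt s y - Pm s y = t * (Q0 r s y - Pm s y) := by
        simp only [hPtdef]
        ring
      rw [h1]
      have h2 : |Q0 r s y - Pm s y| ≤ 1 := by
        rw [abs_le]
        constructor
        · linarith [(Q0_pos r hr s y).le, entry_le_one hPm hrsum s y]
        · linarith [hPm.1 s y, entry_le_one hQf hrsum s y]
      calc -(t * (Q0 r s y - Pm s y) * H' s y) ≤ |t * (Q0 r s y - Pm s y) * H' s y| :=
            neg_le_abs _
        _ = t * (|Q0 r s y - Pm s y| * |H' s y|) := by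
            rw [abs_mul, abs_mul, abs_of_pos ht0]
            ring
        _ ≤ t * (1 * |H' s y|) := by
            apply mul_le_mul_of_nonneg_left _ ht0.le
            exact mul_le_mul_of_nonneg_right h2 (abs_nonneg _)
        _ = t * |H' s y| := by ring
    have hfinal : 0 ≤ Gfun H' Pt - Gfun H' Pm := by linarith
    rw [hGdiff] at hfinal
    rw [hKdef]
    nlinarith [hsumR, hT3, hfinal]
  -- instantiate with a small t to get a contradiction
  set t0 := min (1/2 : ℝ) (Real.exp (-(K+1)/α)) with ht0def
  have ht0pos : 0 < t0 := lt_min (by norm_num) (Real.exp_pos _)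
  have ht0half : t0 ≤ 1/2 := min_le_left _ _
  have hlogt0 : Real.log t0 ≤ -(K+1)/α := by
    calc Real.log t0 ≤ Real.log (Real.exp (-(K+1)/α)) :=
          Real.log_le_log ht0pos (min_le_right _ _)
      _ = -(K+1)/α := Real.log_exp _
  have hk := key t0 ht0pos ht0half
  have h1 : t0 * Real.log t0 ≤ t0 * (-(K+1)/α) :=
    mul_le_mul_of_nonneg_left hlogt0 ht0pos.le
  have h2 : α * (t0 * Real.log t0) ≤ α * (t0 * (-(K+1)/α)) :=
    mul_le_mul_of_nonneg_left h1 hα0.le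
  have hαne : α ≠ 0 := ne_of_gt hα0
  have h3 : α * (t0 * (-(K+1)/α)) = -(K+1) * t0 := by
    field_simp
  nlinarith [hk, h2, h3, ht0pos]
set_option maxHeartbeats 1000000 in
lemma rows_pos {H' : (Fin (n+1) → X) → X → ℝ} {r : X → ℝ}
    {Pm : (Fin (n+1) → X) → X → ℝ}
    (hr : ∀ x, 0 < r x) (hrsum : ∑ x : X, r x = 1)
    (hPm : Feas r Pm) (hmin : ∀ P', Feas r P' → Gfun H' Pm ≤ Gfun H' P') :
    ∀ t, 0 < row Pm t := by
  have hclosed : ∀ s, 0 < row Pm s → ∀ y, 0 < row Pm (nxt s y) := by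
    intro s hs y
    have hentry : 0 < Pm s y := entry_pos_of_row_pos hr hrsum hPm hmin s y hs
    have h1 : Fin.init (nxt s y) = Fin.tail s := by
      simp [nxt]
    have h2 : (nxt s y) (Fin.last n) = y := by
      simp [nxt]
    have hcol : Pm s y ≤ col Pm (nxt s y) := by
      unfold col
      rw [h1, h2]
      have := Finset.single_le_sum (f := fun x => Pm (Fin.cons x (Fin.tail s)) y)
        (fun x _ => hPm.1 _ _) (Finset.mem_univ (s 0))
      simpa [Fin.cons_self_tail] using this
    rw [hPm.2.1 (nxt s y)] at hcol
    linarith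
  have hex : ∃ s, 0 < row Pm s := by
    by_contra h
    push_neg at h
    have hzero : ∑ s : Fin (n+1) → X, row Pm s = 0 :=
      Finset.sum_eq_zero fun s _ => le_antisymm (h s) (row_nonneg hPm s)
    rw [feas_total hPm hrsum] at hzero
    norm_num at hzero
  obtain ⟨sstar, hsstar⟩ := hex
  intro tgt
  have key : ∀ k : ℕ, k ≤ n+1 → ∃ s, 0 < row Pm s ∧ ∀ i : Fin (n+1), n+1-k ≤ i.val →
      s i = tgt ⟨i.val - (n+1-k), by omega⟩ := by
    intro k
    induction k with
    | zero =>
      intro _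
      exact ⟨sstar, hsstar, fun i hi => absurd hi (by omega)⟩
    | succ m ih =>
      intro hm
      obtain ⟨s, hs, hagree⟩ := ih (by omega)
      refine ⟨nxt s (tgt ⟨m, by omega⟩), hclosed s hs _, ?_⟩
      intro i hi
      rcases Fin.eq_castSucc_or_eq_last i with ⟨j, rfl⟩ | rfl
      · have hval : (j.castSucc).val = j.val := rfl
        have hsnoc : nxt s (tgt ⟨m, by omega⟩) j.castSucc = Fin.tail s j := by
          unfold nxt
          exact Fin.snoc_castSucc _ _ j
        rw [hsnoc]
        have htail : Fin.tail s j = s j.succ := rfl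
        rw [htail]
        have hjs : n+1-m ≤ (j.succ).val := by
          have : j.succ.val = j.val + 1 := rfl
          rw [this]
          rw [hval] at hi
          omega
        have := hagree j.succ hjs
        rw [this]
        congr 1
        apply Fin.ext
        simp only
        have : j.succ.val = j.val + 1 := rfl
        rw [this, hval]
        omega
      · have hsnoc : nxt s (tgt ⟨m, by omega⟩) (Fin.last n) = tgt ⟨m, by omega⟩ := by
          unfold nxt
          exact Fin.snoc_last _ _
        rw [hsnoc]
        congr 1
        apply Fin.ext
        simp only [Fin.val_last]
        omega
  obtain ⟨s, hs, hagree⟩ := key (n+1) le_rfl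
  have hseq : s = tgt := by
    funext i
    have h := hagree i (by omega)
    rw [h]
    congr 1
    apply Fin.ext
    simp only
    omega
  rw [← hseq]
  exact hs

lemma all_entries_pos {H' : (Fin (n+1) → X) → X → ℝ} {r : X → ℝ}
    {Pm : (Fin (n+1) → X) → X → ℝ}
    (hr : ∀ x, 0 < r x) (hrsum : ∑ x : X, r x = 1)
    (hPm : Feas r Pm) (hmin : ∀ P', Feas r P' → Gfun H' Pm ≤ Gfun H' P') :
    ∀ s y, 0 < Pm s y := fun s y =>
  entry_pos_of_row_pos hr hrsum hPm hmin s y (rows_pos hr hrsum hPm hmin s)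
lemma exists_factor {V W : Type*} [AddCommGroup V] [Module ℝ V] [AddCommGroup W] [Module ℝ W]
    (A : V →ₗ[ℝ] W) (φ : V →ₗ[ℝ] ℝ) (h : ∀ v, A v = 0 → φ v = 0) :
    ∃ ψ : W →ₗ[ℝ] ℝ, ∀ v, φ v = ψ (A v) := by
  have hker : LinearMap.ker A ≤ LinearMap.ker φ := fun v hv => h v hv
  obtain ⟨q, hq⟩ := Submodule.exists_isCompl (LinearMap.range A)
  refine ⟨(((LinearMap.ker A).liftQ φ hker).comp
      (LinearMap.quotKerEquivRange A).symm.toLinearMap).comp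
      ((LinearMap.range A).linearProjOfIsCompl q hq), fun v => ?_⟩
  have h1 : (LinearMap.range A).linearProjOfIsCompl q hq (A v)
      = ⟨A v, LinearMap.mem_range_self A v⟩ :=
    Submodule.linearProjOfIsCompl_apply_left hq ⟨A v, LinearMap.mem_range_self A v⟩
  simp only [LinearMap.comp_apply, h1, LinearEquiv.coe_coe]
  have h2 : (LinearMap.quotKerEquivRange A).symm ⟨A v, LinearMap.mem_range_self A v⟩
      = Submodule.Quotient.mk v := by
    apply (LinearMap.quotKerEquivRange A).injective
    rw [LinearEquiv.apply_symm_apply]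
    exact Subtype.ext (LinearMap.quotKerEquivRange_apply_mk A v).symm
  rw [h2, Submodule.liftQ_apply]
lemma hasDerivAt_psi_affine {a b : ℝ} (ha : a ≠ 0) :
    HasDerivAt (fun ε : ℝ => (a + ε * b) * Real.log (a + ε * b)) (b * (Real.log a + 1)) 0 := by
  have h0 : HasDerivAt (fun ε : ℝ => a + ε * b) b 0 := by
    simpa using ((hasDerivAt_id (0:ℝ)).mul_const b).const_add a
  have h1 : HasDerivAt (fun x : ℝ => x * Real.log x) (Real.log a + 1) (a + 0 * b) := by
    simpa using Real.hasDerivAt_mul_log ha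
  have := h1.comp 0 h0
  have e : b * (Real.log a + 1) = (Real.log a + 1) * b := mul_comm _ _
  rw [e]; exact this

set_option maxHeartbeats 2000000 in
lemma grad_orth {H' : (Fin (n+1) → X) → X → ℝ} {r : X → ℝ}
    {Pm : (Fin (n+1) → X) → X → ℝ}
    (hpos : ∀ s y, 0 < Pm s y) (hrowpos : ∀ s, 0 < row Pm s)
    (hPm : Feas r Pm) (hmin : ∀ P', Feas r P' → Gfun H' Pm ≤ Gfun H' P')
    (V : (Fin (n+1) → X) → X → ℝ)
    (hV1 : ∀ u, col V u = row V u) (hV2 : ∀ y, ∑ s : Fin (n+1) → X, V s y = 0) :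
    ∑ s : Fin (n+1) → X, ∑ y : X,
      V s y * (Real.log (Pm s y) - Real.log (row Pm s) - H' s y) = 0 := by
  -- uniform bounds for feasibility of perturbation
  have hne : (Finset.univ : Finset ((Fin (n+1) → X) × X)).Nonempty := Finset.univ_nonempty
  set m := Finset.univ.inf' hne (fun e : (Fin (n+1) → X) × X => Pm e.1 e.2) with hm
  have hm0 : 0 < m := by
    rw [hm, Finset.lt_inf'_iff]
    exact fun e _ => hpos e.1 e.2
  have hmle : ∀ s y, m ≤ Pm s y := fun s y =>
    Finset.inf'_le (fun e : (Fin (n+1) → X) × X => Pm e.1 e.2) (Finset.mem_univ (s, y))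
  set B := Finset.univ.sup' hne (fun e : (Fin (n+1) → X) × X => |V e.1 e.2|) with hB
  have hBle : ∀ s y, |V s y| ≤ B := fun s y =>
    Finset.le_sup' (fun e : (Fin (n+1) → X) × X => |V e.1 e.2|) (Finset.mem_univ (s, y))
  have hB0 : 0 ≤ B := le_trans (abs_nonneg _) (hBle (Classical.arbitrary _) (Classical.arbitrary _))
  set δ0 := m / (B + 1) with hδ0
  have hδ0pos : 0 < δ0 := by positivity
  -- the perturbed family is feasible for |ε| < δ0
  have hfeas : ∀ ε : ℝ, |ε| < δ0 → Feas r (fun s y => Pm s y + ε * V s y) := by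
    intro ε hε
    refine ⟨fun s y => ?_, fun u => ?_, fun y => ?_⟩
    · have h1 : |ε * V s y| ≤ |ε| * B := by
        rw [abs_mul]
        exact mul_le_mul_of_nonneg_left (hBle s y) (abs_nonneg _)
      have h2 : |ε| * B < m := by
        have hb1 : |ε| * B ≤ |ε| * (B + 1) := by nlinarith [abs_nonneg ε]
        have : |ε| * (B + 1) < δ0 * (B + 1) := by
          apply mul_lt_mul_of_pos_right hε
          linarith
        rw [hδ0] at this
        rw [div_mul_cancel₀] at this
        · linarith
        · linarith
      have := abs_le.mp (le_of_lt (lt_of_le_of_lt h1 h2))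
      have := hmle s y
      show 0 ≤ Pm s y + ε * V s y
      have h3 : -(ε * V s y) ≤ |ε * V s y| := neg_le_abs _
      have h4 : |ε * V s y| < m := lt_of_le_of_lt h1 h2
      linarith
    · show col _ u = row _ u
      have hc : col (fun s y => Pm s y + ε * V s y) u = col Pm u + ε * col V u := by
        unfold col
        rw [Finset.sum_add_distrib, ← Finset.mul_sum]
      have hrw : row (fun s y => Pm s y + ε * V s y) u = row Pm u + ε * row V u := by
        unfold row
        rw [Finset.sum_add_distrib, ← Finset.mul_sum]
      rw [hc, hrw, hPm.2.1 u, hV1 u]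
    · rw [Finset.sum_add_distrib, ← Finset.mul_sum, hPm.2.2 y, hV2 y]
      ring
  -- local minimum of φ at 0
  set φ : ℝ → ℝ := fun ε => Gfun H' (fun s y => Pm s y + ε * V s y) with hφ
  have hφ0 : φ 0 = Gfun H' Pm := by
    show Gfun H' (fun s y => Pm s y + 0 * V s y) = Gfun H' Pm
    congr 1
    funext s y
    ring
  have hloc : IsLocalMin φ 0 := by
    rw [IsLocalMin, IsMinFilter]
    rw [Metric.eventually_nhds_iff]
    refine ⟨δ0, hδ0pos, fun ε hε => ?_⟩
    rw [Real.dist_eq, sub_zero] at hε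
    rw [hφ0]
    exact hmin _ (hfeas ε hε)
  -- derivative of φ at 0
  set D := (∑ s : Fin (n+1) → X, ∑ y : X, V s y * (Real.log (Pm s y) + 1))
    - (∑ s : Fin (n+1) → X, row V s * (Real.log (row Pm s) + 1))
    - (∑ s : Fin (n+1) → X, ∑ y : X, V s y * H' s y) with hD
  have hderiv : HasDerivAt φ D 0 := by
    rw [hφ, hD]
    have hA : HasDerivAt (fun ε : ℝ => ∑ s : Fin (n+1) → X, ∑ y : X,
        (Pm s y + ε * V s y) * Real.log (Pm s y + ε * V s y))
        (∑ s : Fin (n+1) → X, ∑ y : X, V s y * (Real.log (Pm s y) + 1)) 0 := by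
      apply HasDerivAt.fun_sum
      intro s _
      apply HasDerivAt.fun_sum
      intro y _
      exact hasDerivAt_psi_affine (ne_of_gt (hpos s y))
    have hBrow : HasDerivAt (fun ε : ℝ => ∑ s : Fin (n+1) → X,
        row (fun s y => Pm s y + ε * V s y) s * Real.log (row (fun s y => Pm s y + ε * V s y) s))
        (∑ s : Fin (n+1) → X, row V s * (Real.log (row Pm s) + 1)) 0 := by
      have hrweq : ∀ (s : Fin (n+1) → X) (ε : ℝ),
          row (fun s y => Pm s y + ε * V s y) s = row Pm s + ε * row V s := by
        intro s ε
        unfold row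
        rw [Finset.sum_add_distrib, ← Finset.mul_sum]
      simp_rw [hrweq]
      apply HasDerivAt.fun_sum
      intro s _
      exact hasDerivAt_psi_affine (ne_of_gt (hrowpos s))
    have hC : HasDerivAt (fun ε : ℝ => ∑ s : Fin (n+1) → X, ∑ y : X,
        (Pm s y + ε * V s y) * H' s y)
        (∑ s : Fin (n+1) → X, ∑ y : X, V s y * H' s y) 0 := by
      apply HasDerivAt.fun_sum
      intro s _
      apply HasDerivAt.fun_sum
      intro y _
      have h0 : HasDerivAt (fun ε : ℝ => Pm s y + ε * V s y) (V s y) 0 := by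
        simpa using ((hasDerivAt_id (0:ℝ)).mul_const (V s y)).const_add (Pm s y)
      exact h0.mul_const (H' s y)
    exact (hA.sub hBrow).sub hC
  have hD0 : D = 0 := hloc.hasDerivAt_eq_zero hderiv
  -- rearrange
  have hrowV : ∀ s, row V s * (Real.log (row Pm s) + 1)
      = ∑ y : X, V s y * (Real.log (row Pm s) + 1) := by
    intro s
    unfold row
    rw [Finset.sum_mul]
  calc ∑ s : Fin (n+1) → X, ∑ y : X,
      V s y * (Real.log (Pm s y) - Real.log (row Pm s) - H' s y)
      = ∑ s : Fin (n+1) → X, (∑ y : X, V s y * (Real.log (Pm s y) + 1)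
          - ∑ y : X, V s y * (Real.log (row Pm s) + 1) - ∑ y : X, V s y * H' s y) := by
        apply Finset.sum_congr rfl
        intro s _
        rw [← Finset.sum_sub_distrib, ← Finset.sum_sub_distrib]
        apply Finset.sum_congr rfl
        intro y _
        ring
    _ = D := by
        rw [hD, Finset.sum_sub_distrib, Finset.sum_sub_distrib]
        simp_rw [hrowV]
    _ = 0 := hD0
set_option maxHeartbeats 2000000 in
lemma exists_potentials (g : (Fin (n+1) → X) → X → ℝ)
    (hortho : ∀ V : (Fin (n+1) → X) → X → ℝ, (∀ u, col V u = row V u) →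
      (∀ y, ∑ s : Fin (n+1) → X, V s y = 0) →
      ∑ s : Fin (n+1) → X, ∑ y : X, V s y * g s y = 0) :
    ∃ (ν : (Fin (n+1) → X) → ℝ) (ξ : X → ℝ),
      ∀ s y, g s y = ν (nxt s y) - ν s + ξ y := by
  -- the constraint linear map
  set A : ((Fin (n+1) → X) → X → ℝ) →ₗ[ℝ] ((Fin (n+1) → X) → ℝ) × (X → ℝ) :=
    { toFun := fun P => (fun u => col P u - row P u, fun y => ∑ s : Fin (n+1) → X, P s y)
      map_add' := by
        intro P Q
        refine Prod.ext ?_ ?_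
        · funext u
          simp only [Prod.fst_add, Pi.add_apply, col, row]
          rw [Finset.sum_add_distrib, Finset.sum_add_distrib]
          ring
        · funext y
          simp only [Prod.snd_add, Pi.add_apply]
          rw [Finset.sum_add_distrib]
      map_smul' := by
        intro c P
        refine Prod.ext ?_ ?_
        · funext u
          simp only [Prod.smul_fst, Pi.smul_apply, col, row, smul_eq_mul, RingHom.id_apply]
          rw [← Finset.mul_sum, ← Finset.mul_sum]
          ring
        · funext y
          simp only [Prod.smul_snd, Pi.smul_apply, smul_eq_mul, RingHom.id_apply]
          rw [← Finset.mul_sum] } with hA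
  set φ : ((Fin (n+1) → X) → X → ℝ) →ₗ[ℝ] ℝ :=
    { toFun := fun P => ∑ s : Fin (n+1) → X, ∑ y : X, P s y * g s y
      map_add' := by
        intro P Q
        simp only [Pi.add_apply]
        rw [← Finset.sum_add_distrib]
        apply Finset.sum_congr rfl
        intro s _
        rw [← Finset.sum_add_distrib]
        apply Finset.sum_congr rfl
        intro y _
        ring
      map_smul' := by
        intro c P
        simp only [Pi.smul_apply, smul_eq_mul, RingHom.id_apply]
        rw [Finset.mul_sum]
        apply Finset.sum_congr rfl
        intro s _
        rw [Finset.mul_sum]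
        apply Finset.sum_congr rfl
        intro y _
        ring } with hφ
  have hker : ∀ P, A P = 0 → φ P = 0 := by
    intro P hP
    have h1 : ∀ u, col P u - row P u = 0 := fun u => congrFun (congrArg Prod.fst hP) u
    have h2 : ∀ y, ∑ s : Fin (n+1) → X, P s y = 0 := fun y => congrFun (congrArg Prod.snd hP) y
    exact hortho P (fun u => by linarith [h1 u]) h2
  obtain ⟨ψ, hψ⟩ := exists_factor A φ hker
  set ν : (Fin (n+1) → X) → ℝ := fun u => ψ ((fun v => if u = v then (1:ℝ) else 0), 0) with hν
  set ξ : X → ℝ := fun y => ψ (0, (fun z => if y = z then (1:ℝ) else 0)) with hξ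
  -- ψ is determined by its coefficients
  have hψeval : ∀ (w1 : (Fin (n+1) → X) → ℝ) (w2 : X → ℝ),
      ψ (w1, w2) = (∑ u : Fin (n+1) → X, w1 u * ν u) + ∑ y : X, w2 y * ξ y := by
    intro w1 w2
    have hsplit : (w1, w2) = ((w1, 0) : ((Fin (n+1) → X) → ℝ) × (X → ℝ)) + (0, w2) := by
      simp
    rw [hsplit, map_add]
    congr 1
    · have := LinearMap.pi_apply_eq_sum_univ (ψ.comp (LinearMap.inl ℝ ((Fin (n+1) → X) → ℝ) (X → ℝ))) w1
      simp only [LinearMap.comp_apply, LinearMap.inl_apply] at this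
      rw [this]
      apply Finset.sum_congr rfl
      intro u _
      rw [hν, smul_eq_mul]
    · have := LinearMap.pi_apply_eq_sum_univ (ψ.comp (LinearMap.inr ℝ ((Fin (n+1) → X) → ℝ) (X → ℝ))) w2
      simp only [LinearMap.comp_apply, LinearMap.inr_apply] at this
      rw [this]
      apply Finset.sum_congr rfl
      intro y _
      rw [hξ, smul_eq_mul]
  -- hence for all P : ∑∑ P g = ∑∑ P (ν∘nxt - ν + ξ)
  have hrepr : ∀ P : (Fin (n+1) → X) → X → ℝ,
      ∑ s : Fin (n+1) → X, ∑ y : X, P s y * g s y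
      = ∑ s : Fin (n+1) → X, ∑ y : X, P s y * (ν (nxt s y) - ν s + ξ y) := by
    intro P
    have h0 := hψ P
    rw [hψeval] at h0
    simp only [hA, LinearMap.coe_mk, AddHom.coe_mk] at h0
    have hcolsnoc : ∀ (v : Fin n → X) (y : X),
        col P (Fin.snoc v y) * ν (Fin.snoc v y)
        = ∑ x : X, P (Fin.cons x v) y * ν (Fin.snoc v y) := by
      intro v y
      unfold col
      rw [Fin.init_snoc, Fin.snoc_last, Finset.sum_mul]
    have hnxtcons : ∀ (x : X) (v : Fin n → X) (y : X),
        nxt (Fin.cons x v) y = (Fin.snoc v y : Fin (n+1) → X) := by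
      intro x v y
      unfold nxt
      rw [Fin.tail_cons]
    have hcolν : ∑ u : Fin (n+1) → X, col P u * ν u
        = ∑ s : Fin (n+1) → X, ∑ y : X, P s y * ν (nxt s y) := by
      calc ∑ u : Fin (n+1) → X, col P u * ν u
          = ∑ v : Fin n → X, ∑ y : X, ∑ x : X, P (Fin.cons x v) y * ν (Fin.snoc v y) := by
            rw [sum_snoc_eq (fun u => col P u * ν u)]
            apply Finset.sum_congr rfl
            intro v _
            apply Finset.sum_congr rfl
            intro y _
            exact hcolsnoc v y
        _ = ∑ v : Fin n → X, ∑ x : X, ∑ y : X, P (Fin.cons x v) y * ν (Fin.snoc v y) := by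
            apply Finset.sum_congr rfl
            intro v _
            rw [Finset.sum_comm]
        _ = ∑ x : X, ∑ v : Fin n → X, ∑ y : X, P (Fin.cons x v) y * ν (Fin.snoc v y) :=
            Finset.sum_comm
        _ = ∑ s : Fin (n+1) → X, ∑ y : X, P s y * ν (nxt s y) := by
            rw [sum_cons_eq (fun s => ∑ y : X, P s y * ν (nxt s y))]
            apply Finset.sum_congr rfl
            intro x _
            apply Finset.sum_congr rfl
            intro v _
            apply Finset.sum_congr rfl
            intro y _
            rw [hnxtcons x v y]
    have hrowν : ∑ u : Fin (n+1) → X, row P u * ν u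
        = ∑ s : Fin (n+1) → X, ∑ y : X, P s y * ν s := by
      apply Finset.sum_congr rfl
      intro u _
      unfold row
      rw [Finset.sum_mul]
    have hlet : ∑ y : X, (∑ s : Fin (n+1) → X, P s y) * ξ y
        = ∑ s : Fin (n+1) → X, ∑ y : X, P s y * ξ y := by
      rw [Finset.sum_comm]
      apply Finset.sum_congr rfl
      intro y _
      rw [Finset.sum_mul]
    have hφP : φ P = ∑ s : Fin (n+1) → X, ∑ y : X, P s y * g s y := rfl
    rw [hφP] at h0
    have hsplit : ∑ u : Fin (n+1) → X, (col P u - row P u) * ν u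
        = (∑ u : Fin (n+1) → X, col P u * ν u) - ∑ u : Fin (n+1) → X, row P u * ν u := by
      rw [← Finset.sum_sub_distrib]
      apply Finset.sum_congr rfl
      intro u _
      ring
    rw [h0, hsplit, hcolν, hrowν, hlet]
    rw [show (∑ s : Fin (n+1) → X, ∑ y : X, P s y * ν (nxt s y))
        - (∑ s : Fin (n+1) → X, ∑ y : X, P s y * ν s)
        + (∑ s : Fin (n+1) → X, ∑ y : X, P s y * ξ y)
        = ∑ s : Fin (n+1) → X, ((∑ y : X, P s y * ν (nxt s y))
          - (∑ y : X, P s y * ν s) + (∑ y : X, P s y * ξ y)) from by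
      rw [← Finset.sum_sub_distrib, ← Finset.sum_add_distrib]]
    apply Finset.sum_congr rfl
    intro s _
    rw [← Finset.sum_sub_distrib, ← Finset.sum_add_distrib]
    apply Finset.sum_congr rfl
    intro y _
    ring
  -- plug in the difference to conclude pointwise equality
  refine ⟨ν, ξ, fun s y => ?_⟩
  have hdiff : ∑ s : Fin (n+1) → X, ∑ y : X,
      (g s y - (ν (nxt s y) - ν s + ξ y)) * g s y
      = ∑ s : Fin (n+1) → X, ∑ y : X,
        (g s y - (ν (nxt s y) - ν s + ξ y)) * (ν (nxt s y) - ν s + ξ y) :=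
    hrepr (fun s y => g s y - (ν (nxt s y) - ν s + ξ y))
  have hzero : ∑ s : Fin (n+1) → X, ∑ y : X,
      (g s y - (ν (nxt s y) - ν s + ξ y)) * (g s y - (ν (nxt s y) - ν s + ξ y)) = 0 := by
    calc ∑ s : Fin (n+1) → X, ∑ y : X,
        (g s y - (ν (nxt s y) - ν s + ξ y)) * (g s y - (ν (nxt s y) - ν s + ξ y))
        = ∑ s : Fin (n+1) → X, ∑ y : X,
          ((g s y - (ν (nxt s y) - ν s + ξ y)) * g s y
            - (g s y - (ν (nxt s y) - ν s + ξ y)) * (ν (nxt s y) - ν s + ξ y)) := by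
          apply Finset.sum_congr rfl
          intro s _
          apply Finset.sum_congr rfl
          intro y _
          ring
      _ = (∑ s : Fin (n+1) → X, ∑ y : X, (g s y - (ν (nxt s y) - ν s + ξ y)) * g s y)
          - ∑ s : Fin (n+1) → X, ∑ y : X,
            (g s y - (ν (nxt s y) - ν s + ξ y)) * (ν (nxt s y) - ν s + ξ y) := by
          simp_rw [Finset.sum_sub_distrib]
      _ = 0 := by
          rw [hdiff]
          ring
  have hterm1 := (Finset.sum_eq_zero_iff_of_nonneg
    (fun s (_ : s ∈ Finset.univ) => Finset.sum_nonneg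
      (fun y (_ : y ∈ Finset.univ) => mul_self_nonneg _))).mp hzero s (Finset.mem_univ s)
  have hterm2 := (Finset.sum_eq_zero_iff_of_nonneg
    (fun y (_ : y ∈ Finset.univ) => mul_self_nonneg _)).mp hterm1 y (Finset.mem_univ y)
  have := mul_self_eq_zero.mp hterm2
  linarith
set_option maxHeartbeats 2000000 in
lemma first_marginal {r : X → ℝ} {P : (Fin (n+1) → X) → X → ℝ} (hP : Feas r P) :
    ∀ x1 : X, ∑ u : Fin n → X, row P (Fin.cons x1 u) = r x1 := by
  intro x1
  -- shift-consistency of the two n-dimensional marginals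
  have hqeq : ∀ u : Fin n → X,
      (∑ x : X, row P (Fin.cons x u)) = ∑ y : X, row P (Fin.snoc u y) := by
    intro u
    have hR : ∀ y : X, row P (Fin.snoc u y) = ∑ x : X, P (Fin.cons x u) y := by
      intro y
      rw [← hP.2.1 (Fin.snoc u y)]
      unfold col
      rw [Fin.init_snoc, Fin.snoc_last]
    simp_rw [hR]
    unfold row
    rw [Finset.sum_comm]
  set p := row P with hp
  set marg : Fin (n+1) → X → ℝ :=
    fun j x => ∑ t : Fin (n+1) → X, (if t j = x then p t else 0) with hmarg
  have hstep : ∀ (j : Fin n) (x : X), marg j.castSucc x = marg j.succ x := by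
    intro j x
    have hL : marg j.castSucc x
        = ∑ u : Fin n → X, (if u j = x then ∑ y : X, p (Fin.snoc u y) else 0) := by
      simp only [hmarg]
      rw [sum_snoc_eq (fun t => if t j.castSucc = x then p t else 0)]
      apply Finset.sum_congr rfl
      intro u _
      have : ∀ y : X, (if (Fin.snoc u y : Fin (n+1) → X) j.castSucc = x
          then p (Fin.snoc u y) else 0) = (if u j = x then p (Fin.snoc u y) else 0) := by
        intro y
        rw [Fin.snoc_castSucc]
      simp_rw [this]
      split
      · rfl
      · exact Finset.sum_const_zero
    have hRt : marg j.succ x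
        = ∑ u : Fin n → X, (if u j = x then ∑ x' : X, p (Fin.cons x' u) else 0) := by
      simp only [hmarg]
      rw [sum_cons_eq (fun t => if t j.succ = x then p t else 0)]
      have : ∀ (x' : X) (u : Fin n → X), (if (Fin.cons x' u : Fin (n+1) → X) j.succ = x
          then p (Fin.cons x' u) else 0) = (if u j = x then p (Fin.cons x' u) else 0) := by
        intro x' u
        rw [Fin.cons_succ]
      simp_rw [this]
      rw [Finset.sum_comm]
      apply Finset.sum_congr rfl
      intro u _
      split
      · rfl
      · exact Finset.sum_const_zero
    rw [hL, hRt]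
    apply Finset.sum_congr rfl
    intro u _
    split
    · exact (hqeq u).symm
    · rfl
  have hchain : ∀ k : ℕ, (hk : k ≤ n) → marg ⟨k, by omega⟩ x1 = marg ⟨0, by omega⟩ x1 := by
    intro k
    induction k with
    | zero => intro _; rfl
    | succ m ih =>
      intro hm
      have h1 : (⟨m+1, by omega⟩ : Fin (n+1)) = (⟨m, by omega⟩ : Fin n).succ := rfl
      have h2 : (⟨m, by omega⟩ : Fin (n+1)) = (⟨m, by omega⟩ : Fin n).castSucc := rfl
      rw [h1, ← hstep ⟨m, by omega⟩ x1, ← h2]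
      exact ih (by omega)
  have hlast : marg ⟨n, by omega⟩ x1 = marg ⟨0, by omega⟩ x1 := hchain n le_rfl
  -- marg 0 is the goal LHS
  have h0 : marg ⟨0, by omega⟩ x1 = ∑ u : Fin n → X, p (Fin.cons x1 u) := by
    simp only [hmarg]
    rw [sum_cons_eq (fun t => if t ⟨0, by omega⟩ = x1 then p t else 0)]
    have : ∀ (x' : X) (u : Fin n → X), (if (Fin.cons x' u : Fin (n+1) → X) ⟨0, by omega⟩ = x1
        then p (Fin.cons x' u) else 0) = (if x' = x1 then p (Fin.cons x' u) else 0) := by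
      intro x' u
      rfl
    simp_rw [this]
    rw [show (∑ x' : X, ∑ u : Fin n → X, if x' = x1 then p (Fin.cons x' u) else 0)
        = ∑ x' : X, (if x' = x1 then ∑ u : Fin n → X, p (Fin.cons x' u) else 0) from by
      apply Finset.sum_congr rfl
      intro x' _
      split
      · rfl
      · exact Finset.sum_const_zero]
    rw [Finset.sum_ite_eq' Finset.univ x1 (fun x' => ∑ u : Fin n → X, p (Fin.cons x' u))]
    simp
  -- marg last is r x1
  have hlastval : marg ⟨n, by omega⟩ x1 = r x1 := by
    simp only [hmarg]
    rw [sum_snoc_eq (fun t => if t ⟨n, by omega⟩ = x1 then p t else 0)]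
    have hlasteq : ∀ (u : Fin n → X) (y : X),
        (if (Fin.snoc u y : Fin (n+1) → X) ⟨n, by omega⟩ = x1 then p (Fin.snoc u y) else 0)
        = (if y = x1 then p (Fin.snoc u y) else 0) := by
      intro u y
      have : (⟨n, by omega⟩ : Fin (n+1)) = Fin.last n := rfl
      rw [this, Fin.snoc_last]
    simp_rw [hlasteq]
    have hinner : ∀ u : Fin n → X,
        (∑ y : X, if y = x1 then p (Fin.snoc u y) else 0) = p (Fin.snoc u x1) := by
      intro u
      rw [Finset.sum_ite_eq' Finset.univ x1 (fun y => p (Fin.snoc u y))]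
      simp
    simp_rw [hinner]
    have hcolv : ∀ u : Fin n → X, p (Fin.snoc u x1) = ∑ x : X, P (Fin.cons x u) x1 := by
      intro u
      rw [hp, ← hP.2.1 (Fin.snoc u x1)]
      unfold col
      rw [Fin.init_snoc, Fin.snoc_last]
    simp_rw [hcolv]
    rw [Finset.sum_comm, ← sum_cons_eq (fun t => P t x1)]
    exact hP.2.2 x1
  rw [← h0, ← hlast, hlastval]

set_option maxHeartbeats 2000000 in
theorem main_existence {X : Type*} [Fintype X] [Nonempty X] (n : ℕ)
    (H : (Fin (n + 2) → X) → ℝ) (r : X → ℝ)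
    (hr : ∀ x : X, 0 < r x) (hrsum : ∑ x : X, r x = 1) :
    ∃ (κ : (Fin (n + 1) → X) → ℝ) (δ : X → ℝ),
      (∀ x : Fin (n + 1) → X, ∑ y : X,
          Real.exp (H (Fin.snoc x y) +
            κ (Fin.tail (Fin.snoc x y : Fin (n + 2) → X)) - κ x - δ y) = 1) ∧
      ∃ p : (Fin (n + 1) → X) → ℝ,
        (∀ x : Fin (n + 1) → X, 0 ≤ p x) ∧
        (∑ x : Fin (n + 1) → X, p x = 1) ∧
        (∀ t : Fin (n + 1) → X,
          ∑ x1 : X, p (Fin.cons x1 (Fin.init t)) *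
            Real.exp (H (Fin.snoc (Fin.cons x1 (Fin.init t) : Fin (n + 1) → X)
                (t (Fin.last n))) +
              κ (Fin.tail (Fin.snoc (Fin.cons x1 (Fin.init t) : Fin (n + 1) → X)
                (t (Fin.last n)) : Fin (n + 2) → X)) -
              κ (Fin.cons x1 (Fin.init t)) - δ (t (Fin.last n))) = p t) ∧
        ∀ x1 : X, ∑ t : Fin n → X, p (Fin.cons x1 t) = r x1 := by
  set H' : (Fin (n+1) → X) → X → ℝ := fun s y => H (Fin.snoc s y) with hH'
  obtain ⟨Pm, hPm, hmin⟩ := exists_min H' r hr hrsum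
  have hrowpos : ∀ s, 0 < row Pm s := rows_pos hr hrsum hPm hmin
  have hpos : ∀ s y, 0 < Pm s y := all_entries_pos hr hrsum hPm hmin
  obtain ⟨ν, ξ, hg⟩ := exists_potentials
    (fun s y => Real.log (Pm s y) - Real.log (row Pm s) - H' s y)
    (fun V hV1 hV2 => grad_orth hpos hrowpos hPm hmin V hV1 hV2)
  refine ⟨ν, fun y => -ξ y, ?_, ?_⟩
  · -- the key pointwise identity
    have hkey : ∀ (s : Fin (n+1) → X) (y : X),
        Real.exp (H (Fin.snoc s y) + ν (Fin.tail (Fin.snoc s y : Fin (n+2) → X))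
          - ν s - (-ξ y)) = Pm s y / row Pm s := by
      intro s y
      have h1 : ν (Fin.tail (Fin.snoc s y : Fin (n+2) → X)) = ν (nxt s y) := by
        rw [tail_snoc]
        rfl
      have h2 : H (Fin.snoc s y) = H' s y := rfl
      rw [h1, h2]
      have h3 := hg s y
      have h4 : H' s y + ν (nxt s y) - ν s - (-ξ y)
          = Real.log (Pm s y) - Real.log (row Pm s) := by linarith
      rw [h4, ← Real.log_div (ne_of_gt (hpos s y)) (ne_of_gt (hrowpos s))]
      exact Real.exp_log (div_pos (hpos s y) (hrowpos s))
    intro x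
    simp_rw [hkey x]
    rw [← Finset.sum_div]
    exact div_self (ne_of_gt (hrowpos x))
  · have hkey : ∀ (s : Fin (n+1) → X) (y : X),
        Real.exp (H (Fin.snoc s y) + ν (Fin.tail (Fin.snoc s y : Fin (n+2) → X))
          - ν s - (-ξ y)) = Pm s y / row Pm s := by
      intro s y
      have h1 : ν (Fin.tail (Fin.snoc s y : Fin (n+2) → X)) = ν (nxt s y) := by
        rw [tail_snoc]
        rfl
      have h2 : H (Fin.snoc s y) = H' s y := rfl
      rw [h1, h2]
      have h3 := hg s y
      have h4 : H' s y + ν (nxt s y) - ν s - (-ξ y)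
          = Real.log (Pm s y) - Real.log (row Pm s) := by linarith
      rw [h4, ← Real.log_div (ne_of_gt (hpos s y)) (ne_of_gt (hrowpos s))]
      exact Real.exp_log (div_pos (hpos s y) (hrowpos s))
    refine ⟨row Pm, fun s => (hrowpos s).le, feas_total hPm hrsum, ?_, ?_⟩
    · intro t
      have hterm : ∀ x1 : X,
          row Pm (Fin.cons x1 (Fin.init t)) *
            Real.exp (H (Fin.snoc (Fin.cons x1 (Fin.init t) : Fin (n + 1) → X)
                (t (Fin.last n))) +
              ν (Fin.tail (Fin.snoc (Fin.cons x1 (Fin.init t) : Fin (n + 1) → X)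
                (t (Fin.last n)) : Fin (n + 2) → X)) -
              ν (Fin.cons x1 (Fin.init t)) - (-ξ (t (Fin.last n))))
          = Pm (Fin.cons x1 (Fin.init t)) (t (Fin.last n)) := by
        intro x1
        rw [hkey (Fin.cons x1 (Fin.init t)) (t (Fin.last n))]
        rw [mul_div_cancel₀]
        exact ne_of_gt (hrowpos _)
      simp_rw [hterm]
      have : (∑ x1 : X, Pm (Fin.cons x1 (Fin.init t)) (t (Fin.last n))) = col Pm t := rfl
      rw [this, hPm.2.1 t]
    · exact first_marginal hPm
end S18


/-- existence of the d-th order minimum information Markov kernel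
(here d = n + 1 ≥ 1) with first-order stationary marginal r. -/
theorem stmt_18 {X : Type*} [Fintype X] [Nonempty X] (n : ℕ)
    (H : (Fin (n + 2) → X) → ℝ) (r : X → ℝ)
    (hr : ∀ x : X, 0 < r x) (hrsum : ∑ x : X, r x = 1) :
    ∃ (κ : (Fin (n + 1) → X) → ℝ) (δ : X → ℝ),
      (∀ x : Fin (n + 1) → X, ∑ y : X,
          Real.exp (H (Fin.snoc x y) +
            κ (Fin.tail (Fin.snoc x y : Fin (n + 2) → X)) - κ x - δ y) = 1) ∧
      ∃ p : (Fin (n + 1) → X) → ℝ,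
        (∀ x : Fin (n + 1) → X, 0 ≤ p x) ∧
        (∑ x : Fin (n + 1) → X, p x = 1) ∧
        (∀ t : Fin (n + 1) → X,
          ∑ x1 : X, p (Fin.cons x1 (Fin.init t)) *
            Real.exp (H (Fin.snoc (Fin.cons x1 (Fin.init t) : Fin (n + 1) → X)
                (t (Fin.last n))) +
              κ (Fin.tail (Fin.snoc (Fin.cons x1 (Fin.init t) : Fin (n + 1) → X)
                (t (Fin.last n)) : Fin (n + 2) → X)) -
              κ (Fin.cons x1 (Fin.init t)) - δ (t (Fin.last n))) = p t) ∧
        ∀ x1 : X, ∑ t : Fin n → X, p (Fin.cons x1 t) = r x1 := by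
  exact S18.main_existence n H r hr hrsum
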